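/- arXiv:2501.07208 — 7 statements merged into one kernel-verified Lean document; each statement's English description precedes it below -/
import Mathlib

section
/- Let q > 8 be an odd integer. Define the hint function σ₁ : ℤ_q → {0,1} by σ₁(x) = 0 if the centered representative of x lies in [-⌊q/4⌋+1, ⌊q/4⌋+1] and σ₁(x) = 1 otherwise. Then for every x ∈ ℤ_q, the centered representative of x + σ₁(x)·(q-1)/2 mod q has absolute value at most ⌊q/4⌋ + 1. -/
/-- Centered representative of `z` modulo `q`, lying in `[-(q-1)/2, (q-1)/2]` for odd `q > 0`. -/
def cmod (q z : ℤ) : ℤ := (z + (q - 1) / 2) % q - (q - 1) / 2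

/-- Hint function σ₀. -/
def sigma0 (q z : ℤ) : ℤ := if |cmod q z| ≤ q / 4 then 0 else 1

/-- Hint function σ₁. -/
def sigma1 (q z : ℤ) : ℤ :=
  if -(q / 4) + 1 ≤ cmod q z ∧ cmod q z ≤ q / 4 + 1 then 0 else 1

/-- Extractor function φ. -/
def phi (q x σ : ℤ) : ℤ := cmod q (x + σ * ((q - 1) / 2)) % 2

theorem hint1_bound (q : ℤ) (hq : Odd q) (h8 : 8 < q) (x : ℤ) :
    |cmod q (x + sigma1 q x * ((q - 1) / 2))| ≤ q / 4 + 1 := by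
  obtain ⟨m, hm⟩ := hq
  have hq0 : 0 < q := by omega
  set d := (q - 1) / 2 with hd
  set r := (x + d) % q with hr
  have hr0 : 0 ≤ r := Int.emod_nonneg _ (by omega)
  have hr1 : r < q := Int.emod_lt_of_pos _ hq0
  have hcx : cmod q x = r - d := rfl
  unfold sigma1
  rw [hcx]
  split_ifs with h
  · have : cmod q (x + 0 * d) = r - d := by
      simp only [zero_mul, add_zero]; exact hcx
    rw [this, abs_le]
    omega
  · have hk : q * ((x + d) / q) + r = x + d := Int.mul_ediv_add_emod _ _
    set k := (x + d) / q with hkdef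
    have hx2 : x + d + d = r + d + q * k := by omega
    have hmod : (x + d + d) % q = (r + d) % q := by
      rw [hx2, Int.add_mul_emod_self_left]
    have hcx2 : cmod q (x + 1 * d) = (r + d) % q - d := by
      unfold cmod
      rw [show x + 1 * d + (q - 1) / 2 = x + d + d by rw [← hd]; ring, hmod]
    rw [hcx2]
    by_cases hlt : r + d < q
    · rw [Int.emod_eq_of_lt (by omega) hlt, abs_le]
      omega
    · have h1 : (r + d - q) % q = (r + d) % q := by
        rw [show r + d - q = r + d + q * (-1) by ring, Int.add_mul_emod_self_left]
      have : (r + d) % q = r + d - q := by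
        rw [← h1]
        exact Int.emod_eq_of_lt (by omega) (by omega)
      rw [this, abs_le]
      omega
end

section
/- Let q > 8 be an odd integer, and define the extractor φ(x, σ) = ((x + σ·(q-1)/2) mod q) mod 2, where x ∈ ℤ_q and σ ∈ {0,1}. Suppose x, y ∈ ℤ_q satisfy x - y = 2ε with |2ε| ≤ q/4 - 2 (for the centered representatives), and let σ = σ_b(y) for either hint function b ∈ {0,1}. Then φ(x, σ) = φ(y, σ). -/
lemma cmod_lb (q z : ℤ) (h : 0 < q) : 0 ≤ cmod q z + (q - 1) / 2 := by
  unfold cmod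
  have := Int.emod_nonneg (z + (q - 1) / 2) (by omega : q ≠ 0)
  omega

lemma cmod_ub (q z : ℤ) (h : 0 < q) : cmod q z + (q - 1) / 2 < q := by
  unfold cmod
  have := Int.emod_lt_of_pos (z + (q - 1) / 2) h
  omega

lemma cmod_dvd (q z : ℤ) : q ∣ z - cmod q z := by
  refine ⟨(z + (q - 1) / 2) / q, ?_⟩
  have := Int.emod_def (z + (q - 1) / 2) q
  unfold cmod
  omega

lemma cmod_congr (q z w : ℤ) (h : q ∣ z - w) : cmod q z = cmod q w := by
  have h2 : q ∣ (z + (q - 1) / 2) - (w + (q - 1) / 2) := by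
    have e : (z + (q - 1) / 2) - (w + (q - 1) / 2) = z - w := by ring
    rw [e]; exact h
  have h3 : (w + (q - 1) / 2) % q = (z + (q - 1) / 2) % q := Int.modEq_iff_dvd.mpr h2
  unfold cmod
  omega

lemma cmod_of_range (q z : ℤ) (h1 : 0 ≤ z + (q - 1) / 2) (h2 : z + (q - 1) / 2 < q) :
    cmod q z = z := by
  unfold cmod
  rw [Int.emod_eq_of_lt h1 h2]
  ring

lemma cmod_add_half (q z : ℤ) (hq : Odd q) (h8 : 8 < q) :
    cmod q (z + (q - 1) / 2) =
      if cmod q z ≤ 0 then cmod q z + (q - 1) / 2 else cmod q z - (q - 1) / 2 - 1 := by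
  obtain ⟨m, hm⟩ := hq
  have hm2 : (q - 1) / 2 = m := by omega
  have h0 : (0:ℤ) < q := by omega
  have hlb := cmod_lb q z h0
  have hub := cmod_ub q z h0
  have hd := cmod_dvd q z
  have hcongr : cmod q (z + (q - 1) / 2) = cmod q (cmod q z + (q - 1) / 2) :=
    cmod_congr _ _ _ (by
      obtain ⟨k, hk⟩ := hd
      exact ⟨k, by linarith⟩)
  rw [hcongr]
  by_cases hc : cmod q z ≤ 0
  · rw [if_pos hc]
    exact cmod_of_range _ _ (by omega) (by omega)
  · rw [if_neg hc]
    have : cmod q (cmod q z + (q - 1) / 2) = cmod q (cmod q z + (q - 1) / 2 - q) :=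
      cmod_congr _ _ _ ⟨1, by ring⟩
    rw [this, cmod_of_range _ _ (by omega) (by omega)]
    omega

theorem robust_extractor (q x y ε : ℤ) (hq : Odd q) (h8 : 8 < q)
    (hdiff : cmod q x - cmod q y = 2 * ε)
    (hbound : 4 * |2 * ε| ≤ q - 8)
    (σ : ℤ) (hσ : σ = sigma0 q y ∨ σ = sigma1 q y) :
    phi q x σ = phi q y σ := by
  obtain ⟨m, hm⟩ := hq
  have h0 : (0:ℤ) < q := by omega
  have habs1 : 2 * ε ≤ |2 * ε| := le_abs_self _
  have habs2' : -|2 * ε| ≤ 2 * ε := neg_abs_le _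
  have hxl := cmod_lb q x h0
  have hxu := cmod_ub q x h0
  have hyl := cmod_lb q y h0
  have hyu := cmod_ub q y h0
  -- Case on the value of σ
  rcases hσ with hσ | hσ
  · unfold sigma0 at hσ
    split_ifs at hσ with h
    · -- σ = 0
      subst hσ
      unfold phi
      simp only [zero_mul, add_zero]
      omega
    · -- σ = 1, hint says |cmod q y| > q/4
      subst hσ
      unfold phi
      simp only [one_mul]
      rw [cmod_add_half q x ⟨m, hm⟩ h8, cmod_add_half q y ⟨m, hm⟩ h8]
      rw [not_le] at h
      have habs2 : |cmod q y| = cmod q y ∨ |cmod q y| = -(cmod q y) := abs_choice _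
      rcases habs2 with habs2 | habs2 <;> split_ifs with h1 h2 h2 <;> omega
  · unfold sigma1 at hσ
    split_ifs at hσ with h
    · subst hσ
      unfold phi
      simp only [zero_mul, add_zero]
      omega
    · subst hσ
      unfold phi
      simp only [one_mul]
      rw [cmod_add_half q x ⟨m, hm⟩ h8, cmod_add_half q y ⟨m, hm⟩ h8]
      rw [not_and_or, not_le, not_le] at h
      split_ifs with h1 h2 h2 <;> omega
end

section
/- Let q > 8 be odd and let σ ∈ {0,1}. For any y ∈ ℤ_q with |centered(y + σ·(q-1)/2 mod q)| ≤ ⌊q/4⌋ + 1 and any integer ε with |2ε| ≤ q/4 - 2, we have |centered(y + σ·(q-1)/2 mod q) + 2ε| ≤ (q-1)/2, and consequently centered((y + 2ε) + σ·(q-1)/2 mod q) = centered(y + σ·(q-1)/2 mod q) + 2ε. -/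
lemma cmod_add_eq (q z e : ℤ) (hq : 0 < q)
    (h : |cmod q z + e| ≤ (q - 1) / 2) : cmod q (z + e) = cmod q z + e := by
  unfold cmod at *
  set m := (q - 1) / 2 with hm
  have hmq : 2 * m ≤ q - 1 := by omega
  have hr1 : 0 ≤ (z + m) % q := Int.emod_nonneg _ (by omega)
  have hr2 : (z + m) % q < q := Int.emod_lt_of_pos _ hq
  rw [abs_le] at h
  have h1 : z + e + m = (z + m) + e := by ring
  rw [h1, ← Int.emod_add_emod]
  rw [Int.emod_eq_of_lt (by omega) (by omega)]
  ring

theorem no_wraparound_step (q y ε σ : ℤ) (hq : Odd q) (h8 : 8 < q)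
    (hσ : σ = 0 ∨ σ = 1)
    (hy : |cmod q (y + σ * ((q - 1) / 2))| ≤ q / 4 + 1)
    (hε : 4 * |2 * ε| ≤ q - 8) :
    |cmod q (y + σ * ((q - 1) / 2)) + 2 * ε| ≤ (q - 1) / 2 ∧
    cmod q ((y + 2 * ε) + σ * ((q - 1) / 2)) = cmod q (y + σ * ((q - 1) / 2)) + 2 * ε := by
  have habs : |cmod q (y + σ * ((q - 1) / 2)) + 2 * ε| ≤ (q - 1) / 2 := by
    have h1 := le_abs_self (2 * ε)
    have h2 := neg_abs_le (2 * ε)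
    rw [abs_le] at hy ⊢
    omega
  refine ⟨habs, ?_⟩
  have h1 : (y + 2 * ε) + σ * ((q - 1) / 2) = (y + σ * ((q - 1) / 2)) + 2 * ε := by ring
  rw [h1, cmod_add_eq q _ _ (by omega) habs]
end

section
/- Let q be an odd integer and n ≥ 1. Suppose Client and Server compute M_C = (S_I + S_C)(B_S − V) + 2E'_C and M_S = (V + B_C)S_S + 2E'_S over ℤ_q^{n×n}, where V = S_I·A + 2E_I, B_C = S_C·A + 2E_C, and B_S = V + A·S_S + 2E_S. Then M_C − M_S = 2(S_I·E_S + S_C·E_S + E'_C − E_C·S_S − E_I·S_S − E'_S) in ℤ_q^{n×n}; in particular M_C ≡ M_S modulo the even error term, and M_C − M_S has all entries even (as lifts). -/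
theorem key_material_difference (q n : ℕ) (hq : Odd q) (hn : 1 ≤ n)
    (A SI SC SS EI EC ES EC' ES' V BC BS MC MS : Matrix (Fin n) (Fin n) (ZMod q))
    (hV : V = SI * A + 2 • EI)
    (hBC : BC = SC * A + 2 • EC)
    (hBS : BS = V + A * SS + 2 • ES)
    (hMC : MC = (SI + SC) * (BS - V) + 2 • EC')
    (hMS : MS = (V + BC) * SS + 2 • ES') :
    MC - MS = 2 • (SI * ES + SC * ES + EC' - EC * SS - EI * SS - ES') ∧
    ∀ i j, ∃ f : ZMod q, (MC - MS) i j = 2 * f := by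
  have key : MC - MS = 2 • (SI * ES + SC * ES + EC' - EC * SS - EI * SS - ES') := by
    subst hV hBC hBS hMC hMS
    simp only [smul_eq_mul, nsmul_eq_mul] at *
    push_cast
    noncomm_ring
  refine ⟨key, fun i j => ⟨(SI * ES + SC * ES + EC' - EC * SS - EI * SS - ES') i j, ?_⟩⟩
  rw [key]
  simp
end

section
/- Define the entrywise sup-norm ‖M‖ = max_{i,j} |centered(M_{i,j})| for M ∈ ℤ_q^{n×n} with centered representatives in (−q/2, q/2]. If each of the matrices S_I, S_C, S_S, E_I, E_C, E_S, E'_C, E'_S has entries whose centered representatives are bounded in absolute value by β, and all products S·E occurring have centered-representative entries bounded by β²·n (no modular wraparound), then the difference M_C − M_S = 2(S_I·E_S + S_C·E_S + E'_C − E_C·S_S − E_I·S_S − E'_S) satisfies ‖M_C − M_S‖ ≤ 2(4nβ² + 2β) ≤ 12nβ² (assuming β ≥ 1 and n ≥ 1). -/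
lemma mul_entry_bound {n : ℕ} (β : ℤ) (hβ : 0 ≤ β)
    (A B : Matrix (Fin n) (Fin n) ℤ)
    (hA : ∀ i j, |A i j| ≤ β) (hB : ∀ i j, |B i j| ≤ β) (i j : Fin n) :
    |(A * B) i j| ≤ n * β ^ 2 := by
  have : (A * B) i j = ∑ k, A i k * B k j := rfl
  rw [this]
  calc |∑ k, A i k * B k j| ≤ ∑ k, |A i k * B k j| := Finset.abs_sum_le_sum_abs _ _
    _ ≤ ∑ _k : Fin n, β ^ 2 := by
        apply Finset.sum_le_sum
        intro k _
        rw [abs_mul, sq]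
        exact mul_le_mul (hA i k) (hB k j) (abs_nonneg _) hβ
    _ = n * β ^ 2 := by simp [mul_comm]

theorem key_material_difference_bound (q : ℤ) (n : ℕ) (β : ℤ)
    (hq : Odd q) (h8 : 8 < q) (hβ : 1 ≤ β) (hn : 1 ≤ n)
    (SI SC SS EI EC ES EC' ES' D : Matrix (Fin n) (Fin n) ℤ)
    (hSI : ∀ i j, |SI i j| ≤ β) (hSC : ∀ i j, |SC i j| ≤ β)
    (hSS : ∀ i j, |SS i j| ≤ β) (hEI : ∀ i j, |EI i j| ≤ β)
    (hEC : ∀ i j, |EC i j| ≤ β) (hES : ∀ i j, |ES i j| ≤ β)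
    (hEC' : ∀ i j, |EC' i j| ≤ β) (hES' : ∀ i j, |ES' i j| ≤ β)
    (hD : D = 2 • (SI * ES + SC * ES + EC' - EC * SS - EI * SS - ES')) :
    (∀ i j, |D i j| ≤ 2 * (4 * n * β ^ 2 + 2 * β)) ∧
    2 * (4 * (n : ℤ) * β ^ 2 + 2 * β) ≤ 12 * n * β ^ 2 := by
  have hβ0 : (0:ℤ) ≤ β := le_trans zero_le_one hβ
  constructor
  · intro i j
    subst hD
    have h1 := mul_entry_bound β hβ0 SI ES hSI hES i j
    have h2 := mul_entry_bound β hβ0 SC ES hSC hES i j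
    have h3 := mul_entry_bound β hβ0 EC SS hEC hSS i j
    have h4 := mul_entry_bound β hβ0 EI SS hEI hSS i j
    have h5 := hEC' i j
    have h6 := hES' i j
    have heq : (2 • (SI * ES + SC * ES + EC' - EC * SS - EI * SS - ES')) i j
        = 2 * ((SI * ES) i j + (SC * ES) i j + EC' i j - (EC * SS) i j
            - (EI * SS) i j - ES' i j) := by
      simp [Matrix.sub_apply, Matrix.add_apply, Matrix.smul_apply]
    rw [heq, abs_mul]
    have : |((SI * ES) i j + (SC * ES) i j + EC' i j - (EC * SS) i j
        - (EI * SS) i j - ES' i j)| ≤ 4 * n * β ^ 2 + 2 * β := by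
      calc |((SI * ES) i j + (SC * ES) i j + EC' i j - (EC * SS) i j
          - (EI * SS) i j - ES' i j)|
          ≤ |(SI * ES) i j| + |(SC * ES) i j| + |EC' i j| + |(EC * SS) i j|
            + |(EI * SS) i j| + |ES' i j| := by
            apply (abs_sub _ _).trans
            gcongr
            apply (abs_sub _ _).trans
            gcongr
            apply (abs_sub _ _).trans
            gcongr
            apply (abs_add_le _ _).trans
            gcongr
            exact abs_add_le _ _
        _ ≤ 4 * n * β ^ 2 + 2 * β := by linarith
    rw [abs_two]
    linarith
  · have hn' : (1:ℤ) ≤ n := by exact_mod_cast hn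
    have hb2 : β ≤ β ^ 2 := by nlinarith
    nlinarith [mul_le_mul hn' hb2 (le_trans zero_le_one hβ) (le_trans zero_le_one hn')]
end

section
/- Let q > 8 be odd and x, y ∈ ℤ with x ≡ y (mod 2) and |x − y| ≤ q/4 − 2, and suppose |centered(y + σ·(q−1)/2 mod q)| ≤ ⌊q/4⌋ + 1 for some σ ∈ {0,1}. Then centered(x + σ·(q−1)/2 mod q) and centered(y + σ·(q−1)/2 mod q) have the same parity. -/
theorem parity_preservation (q x y σ : ℤ) (hq : Odd q) (h8 : 8 < q)
    (hpar : x % 2 = y % 2) (hclose : 4 * |x - y| ≤ q - 8)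
    (hσ : σ = 0 ∨ σ = 1)
    (hy : |cmod q (y + σ * ((q - 1) / 2))| ≤ q / 4 + 1) :
    cmod q (x + σ * ((q - 1) / 2)) % 2 = cmod q (y + σ * ((q - 1) / 2)) % 2 := by
  have hq2 : q % 2 = 1 := Int.odd_iff.mp hq
  unfold cmod at hy ⊢
  rcases abs_le.mp hy with ⟨h1, h2⟩
  have hm0 : 0 ≤ (y + σ * ((q - 1) / 2) + (q - 1) / 2) % q := Int.emod_nonneg _ (by omega)
  have hm1 : (y + σ * ((q - 1) / 2) + (q - 1) / 2) % q < q := Int.emod_lt_of_pos _ (by omega)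
  have key : (x + σ * ((q - 1) / 2) + (q - 1) / 2) % q
      = (y + σ * ((q - 1) / 2) + (q - 1) / 2) % q + (x - y) := by
    have e : x + σ * ((q - 1) / 2) + (q - 1) / 2
        = (y + σ * ((q - 1) / 2) + (q - 1) / 2) + (x - y) := by ring
    rcases abs_cases (x - y) with ⟨he, _⟩ | ⟨he, _⟩ <;> rw [he] at hclose <;>
      (rw [e, ← Int.emod_add_emod]; exact Int.emod_eq_of_lt (by omega) (by omega))
  rw [key]
  omega
end

section
/- For odd q > 8 and any y ∈ ℤ_q, at least one of the following holds: the centered representative of y lies in [−⌊q/4⌋, ⌊q/4⌋] (so σ₀(y) = 0 and |centered(y)| ≤ ⌊q/4⌋ + 1 trivially), or σ₀(y) = 1 and |centered(y + (q−1)/2 mod q)| ≤ ⌊q/4⌋ + 1. In other words, for every y, |centered(y + σ₀(y)·(q−1)/2 mod q)| ≤ ⌊q/4⌋ + 1. -/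
theorem sigma0_shift_bound (q y : ℤ) (hq : Odd q) (h8 : 8 < q) :
    ((sigma0 q y = 0 ∧ |cmod q y| ≤ q / 4 + 1) ∨
      (sigma0 q y = 1 ∧ |cmod q (y + (q - 1) / 2)| ≤ q / 4 + 1)) ∧
    |cmod q (y + sigma0 q y * ((q - 1) / 2))| ≤ q / 4 + 1 := by
  obtain ⟨t, ht⟩ := hq
  have hq2 : (0:ℤ) < q := by omega
  set m := (q - 1) / 2 with hmdef
  set r := (y + m) % q with hrdef
  have hr0 : 0 ≤ r := Int.emod_nonneg _ (by omega)
  have hr1 : r < q := Int.emod_lt_of_pos _ hq2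
  have hcy : cmod q y = r - m := rfl
  have hmm : m % q = m := Int.emod_eq_of_lt (by omega) (by omega)
  have hc2 : cmod q (y + m) = (r + m) % q - m := by
    unfold cmod
    rw [← hmdef, show y + m + m = (y + m) + m by ring, Int.add_emod, hmm, ← hrdef]
  have hc2' : cmod q (y + m) = (if r + m < q then r + m else r + m - q) - m := by
    rw [hc2]
    split
    · rw [Int.emod_eq_of_lt (by omega) (by assumption)]
    · rw [show r + m = (r + m - q) + 1 * q by ring, Int.add_mul_emod_self_right,
        Int.emod_eq_of_lt (by omega) (by omega)]; ring
  by_cases hs : |cmod q y| ≤ q / 4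
  · have hs' := hs
    rw [hcy, abs_le] at hs'
    have h0 : sigma0 q y = 0 := by simp [sigma0, hs]
    rw [h0]
    simp only [zero_mul, add_zero]
    refine ⟨Or.inl ⟨trivial, ?_⟩, ?_⟩ <;> · rw [hcy, abs_le]; omega
  · have hs' := hs
    rw [hcy, abs_le] at hs'
    have h0 : sigma0 q y = 1 := by simp [sigma0, hs]
    rw [h0]
    simp only [one_mul]
    have hb : |cmod q (y + m)| ≤ q / 4 + 1 := by
      rw [hc2', abs_le]
      split <;> omega
    exact ⟨Or.inr ⟨trivial, hb⟩, hb⟩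
end
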